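/- arXiv:2206.01666 — 2 statements merged into one kernel-verified Lean document; each statement's English description precedes it below -/
import Mathlib

section
/- Let m ≥ 1 and L > 0, let f : ℝ^m → ℝ be differentiable with L-Lipschitz gradient on the nonnegative orthant ℝ^m_+, and let λ* ∈ ℝ^m_+ satisfy f(λ*) ≤ f(μ) for all μ ∈ ℝ^m_+. Fix λ ∈ ℝ^m_+, write a := ∇f(λ), and let J' := {i : a_i ≥ 0 and λ_i < a_i/L}. Then Σ_{i ∈ J'} a_i·λ_i ≤ 2·(f(λ) − f(λ*)). -/
/-!
Let `a = ∇f(λ)` and let `μ` be `λ` with its coordinates in `J'` set to zero; `μ` stays in the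
orthant. On the orthant (a convex set) the `L`-Lipschitz gradient gives the descent lemma
`f μ ≤ f λ + ⟪a, μ - λ⟫ + L/2 ‖μ - λ‖²`. Here `⟪a, μ - λ⟫ = -∑_{J'} aᵢλᵢ` and
`L ‖μ - λ‖² = ∑_{J'} L λᵢ² ≤ ∑_{J'} aᵢλᵢ` because `Lλᵢ < aᵢ` on `J'`, so
`f λ* ≤ f μ ≤ f λ - ½ ∑_{J'} aᵢλᵢ`.
-/

open scoped RealInnerProductSpace

section DescentLemma

variable {E : Type*} [NormedAddCommGroup E] [InnerProductSpace ℝ E] [CompleteSpace E]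
  {f : E → ℝ} {s : Set E} {L : ℝ}

theorem DifferentiableAt.hasDerivAt_comp_add_smul {x v : E} {t : ℝ}
    (hf : DifferentiableAt ℝ f (x + t • v)) :
    HasDerivAt (fun t : ℝ => f (x + t • v)) ⟪gradient f (x + t • v), v⟫ t := by
  have hline : HasDerivAt (fun t : ℝ => x + t • v) v t := by
    simpa using ((hasDerivAt_id t).smul_const v).const_add x
  simpa [InnerProductSpace.toDual_apply_apply, Function.comp_def] using
    hf.hasGradientAt.hasFDerivAt.comp_hasDerivAt t hline

theorem Convex.le_add_inner_gradient_add_of_lipschitz_gradient (hs : Convex ℝ s)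
    (hf : ∀ x ∈ s, DifferentiableAt ℝ f x)
    (hlip : ∀ x ∈ s, ∀ y ∈ s, ‖gradient f x - gradient f y‖ ≤ L * ‖x - y‖)
    {x y : E} (hx : x ∈ s) (hy : y ∈ s) :
    f y ≤ f x + ⟪gradient f x, y - x⟫ + L / 2 * ‖y - x‖ ^ 2 := by
  set v := y - x
  have hseg : ∀ t ∈ Set.Icc (0 : ℝ) 1, x + t • v ∈ s := fun t ht => by
    simpa [v, AffineMap.lineMap_apply_module', add_comm] using
      hs.lineMap_mem hx hy ht
  set g : ℝ → ℝ := fun t => f (x + t • v) - t * ⟪gradient f x, v⟫ - L / 2 * ‖v‖ ^ 2 * t ^ 2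
  have hg : ∀ t ∈ Set.Icc (0 : ℝ) 1, HasDerivAt g
      (⟪gradient f (x + t • v), v⟫ - ⟪gradient f x, v⟫ - L * ‖v‖ ^ 2 * t) t := fun t ht =>
    (((hf _ (hseg t ht)).hasDerivAt_comp_add_smul.sub
      ((hasDerivAt_id t).mul_const _)).sub
      ((hasDerivAt_pow 2 t).const_mul _)).congr_deriv (by norm_num; ring)
  have hg' : ∀ t ∈ Set.Ioo (0 : ℝ) 1,
      ⟪gradient f (x + t • v), v⟫ - ⟪gradient f x, v⟫ - L * ‖v‖ ^ 2 * t ≤ 0 := by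
    intro t ht
    have hgrad : ‖gradient f (x + t • v) - gradient f x‖ ≤ L * t * ‖v‖ := by
      simpa [norm_smul, abs_of_pos ht.1, mul_assoc] using
        hlip _ (hseg t (Set.Ioo_subset_Icc_self ht)) x hx
    rw [sub_nonpos]
    calc ⟪gradient f (x + t • v), v⟫ - ⟪gradient f x, v⟫
        = ⟪gradient f (x + t • v) - gradient f x, v⟫ := (inner_sub_left ..).symm
      _ ≤ ‖gradient f (x + t • v) - gradient f x‖ * ‖v‖ := real_inner_le_norm _ _
      _ ≤ L * t * ‖v‖ * ‖v‖ := by gcongr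
      _ = L * ‖v‖ ^ 2 * t := by ring
  have hanti : AntitoneOn g (Set.Icc 0 1) := by
    refine antitoneOn_of_deriv_nonpos (convex_Icc 0 1)
      (fun t ht => (hg t ht).continuousAt.continuousWithinAt) (fun t ht => ?_) (fun t ht => ?_)
    all_goals rw [interior_Icc] at ht
    · exact (hg t (Set.Ioo_subset_Icc_self ht)).differentiableAt.differentiableWithinAt
    · rw [(hg t (Set.Ioo_subset_Icc_self ht)).deriv]
      exact hg' t ht
  have := hanti (by simp) (by simp) zero_le_one
  simp only [g, one_smul, zero_smul, add_zero, v, add_sub_cancel] at this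
  linarith

end DescentLemma

namespace EuclideanSpace

variable {ι : Type*}

theorem convex_setOf_forall_nonneg :
    Convex ℝ {x : EuclideanSpace ℝ ι | ∀ i, 0 ≤ x i} := fun _ hx _ hy _ _ ha hb _ i =>
  add_nonneg (mul_nonneg ha (hx i)) (mul_nonneg hb (hy i))

variable [DecidableEq ι]

def zeroCoords (J : Finset ι) (x : EuclideanSpace ℝ ι) : EuclideanSpace ℝ ι :=
  WithLp.toLp 2 fun i => if i ∈ J then 0 else x i

theorem zeroCoords_nonneg {J : Finset ι} {x : EuclideanSpace ℝ ι}
    (hx : ∀ i, 0 ≤ x i) (i : ι) : 0 ≤ zeroCoords J x i := by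
  by_cases hi : i ∈ J <;> simp [zeroCoords, hi, hx i]

theorem inner_zeroCoords_sub_add_half_mul_norm_sq_le [Fintype ι] {L : ℝ}
    (a x : EuclideanSpace ℝ ι) (J : Finset ι) (hJ : ∀ i ∈ J, 0 ≤ x i ∧ L * x i ≤ a i) :
    ⟪a, zeroCoords J x - x⟫ + L / 2 * ‖zeroCoords J x - x‖ ^ 2 ≤
      -(∑ i ∈ J, a i * x i) / 2 := by
  set d := zeroCoords J x - x
  have hd : ∀ i, d i = if i ∈ J then -x i else 0 := fun i => by
    by_cases hi : i ∈ J <;> simp [d, zeroCoords, hi]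
  have hinner : ⟪a, d⟫ = -∑ i ∈ J, a i * x i := by
    simp [PiLp.inner_apply, hd, mul_comm, Finset.sum_ite_mem]
  have hnorm : ‖d‖ ^ 2 = ∑ i ∈ J, x i ^ 2 := by
    simp [EuclideanSpace.norm_sq_eq, hd, Finset.sum_ite_mem, apply_ite]
  have hsq : L * ∑ i ∈ J, x i ^ 2 ≤ ∑ i ∈ J, a i * x i := by
    rw [Finset.mul_sum]
    refine Finset.sum_le_sum fun i hi => ?_
    rw [sq, ← mul_assoc]
    exact mul_le_mul_of_nonneg_right (hJ i hi).2 (hJ i hi).1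
  rw [hinner, hnorm]
  linarith

end EuclideanSpace

theorem stmt_9_general (m : ℕ) (L : ℝ) (hL : 0 < L)
    (f : EuclideanSpace ℝ (Fin m) → ℝ) (hf : Differentiable ℝ f)
    (hlip : ∀ x : EuclideanSpace ℝ (Fin m), (∀ i, 0 ≤ x i) →
      ∀ y : EuclideanSpace ℝ (Fin m), (∀ i, 0 ≤ y i) →
      ‖gradient f x - gradient f y‖ ≤ L * ‖x - y‖)
    (lstar : EuclideanSpace ℝ (Fin m))
    (hmin : ∀ μ : EuclideanSpace ℝ (Fin m), (∀ i, 0 ≤ μ i) → f lstar ≤ f μ)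
    (lam : EuclideanSpace ℝ (Fin m)) (hlam : ∀ i, 0 ≤ lam i) :
    ∑ i ∈ Finset.univ.filter
        (fun i => 0 ≤ gradient f lam i ∧ lam i < gradient f lam i / L),
      gradient f lam i * lam i ≤ 2 * (f lam - f lstar) := by
  set J := Finset.univ.filter fun i => 0 ≤ gradient f lam i ∧ lam i < gradient f lam i / L
  have hJ : ∀ i ∈ J, 0 ≤ lam i ∧ L * lam i ≤ gradient f lam i := fun i hi =>
    ⟨hlam i, by simpa [mul_comm] using ((lt_div_iff₀ hL).1 (Finset.mem_filter.1 hi).2.2).le⟩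
  have hμ := EuclideanSpace.zeroCoords_nonneg (J := J) hlam
  have hdescent :=
    EuclideanSpace.convex_setOf_forall_nonneg.le_add_inner_gradient_add_of_lipschitz_gradient
      (fun x _ => hf x) hlip hlam hμ
  have hdecrease :=
    EuclideanSpace.inner_zeroCoords_sub_add_half_mul_norm_sq_le (gradient f lam) lam J hJ
  linarith [hmin _ hμ]

theorem stmt_9 (m : ℕ) (hm : 1 ≤ m) (L : ℝ) (hL : 0 < L)
    (f : EuclideanSpace ℝ (Fin m) → ℝ) (hf : Differentiable ℝ f)
    (hlip : ∀ x : EuclideanSpace ℝ (Fin m), (∀ i, 0 ≤ x i) →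
      ∀ y : EuclideanSpace ℝ (Fin m), (∀ i, 0 ≤ y i) →
      ‖gradient f x - gradient f y‖ ≤ L * ‖x - y‖)
    (lstar : EuclideanSpace ℝ (Fin m)) (hstar : ∀ i, 0 ≤ lstar i)
    (hmin : ∀ μ : EuclideanSpace ℝ (Fin m), (∀ i, 0 ≤ μ i) → f lstar ≤ f μ)
    (lam : EuclideanSpace ℝ (Fin m)) (hlam : ∀ i, 0 ≤ lam i) :
    ∑ i ∈ Finset.univ.filter
        (fun i => 0 ≤ gradient f lam i ∧ lam i < gradient f lam i / L),
      gradient f lam i * lam i ≤ 2 * (f lam - f lstar) :=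
  stmt_9_general m L hL f hf hlip lstar hmin lam hlam
end

section
/- Let m ≥ 1 and L > 0, let f : ℝ^m → ℝ be differentiable with L-Lipschitz gradient on the nonnegative orthant ℝ^m_+, and let λ* ∈ ℝ^m_+ satisfy f(λ*) ≤ f(μ) for all μ ∈ ℝ^m_+. Then for every λ ∈ ℝ^m_+, writing I := {i : λ_i > (∂f/∂λ_i)(λ)/L} and I' for its complement in {1, …, m}, it holds that (1/(2L))·Σ_{i ∈ I} ((∂f/∂λ_i)(λ))² + (1/2)·Σ_{i ∈ I'} (∂f/∂λ_i)(λ)·λ_i ≤ f(λ) − f(λ*). -/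
/-!
A function with `L`-Lipschitz gradient on a convex set satisfies the descent lemma
`f y ≤ f x + ⟪∇f x, y - x⟫ + L/2 ‖y - x‖²` there. Take `x = λ` and for `y` the projected gradient
step `max (λ - ∇f(λ)/L, 0)`, which stays in the orthant. The correction
`⟪∇f λ, y - λ⟫ + L/2 ‖y - λ‖²` splits over coordinates: its `i`-th term is `-∇ᵢf(λ)² / (2L)`
where the step is not clipped at `0`, and at most `-∇ᵢf(λ) λᵢ / 2` where it is. Then
`f λ* ≤ f y` gives the claim.
-/

open InnerProductSpace

section Descent

variable {E : Type*} [NormedAddCommGroup E] [InnerProductSpace ℝ E] [CompleteSpace E]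

theorem Convex.le_add_inner_gradient_add_sq {f : E → ℝ} (hf : Differentiable ℝ f) {L : ℝ}
    {s : Set E} (hs : Convex ℝ s)
    (hlip : ∀ x ∈ s, ∀ y ∈ s, ‖gradient f x - gradient f y‖ ≤ L * ‖x - y‖)
    {x y : E} (hx : x ∈ s) (hy : y ∈ s) :
    f y ≤ f x + ⟪gradient f x, y - x⟫_ℝ + L / 2 * ‖y - x‖ ^ 2 := by
  set g := y - x
  -- `φ` is the gap between `f` along the segment and the claimed quadratic upper bound.
  set φ : ℝ → ℝ := fun t => f (x + t • g) - t * ⟪gradient f x, g⟫_ℝ - L / 2 * t ^ 2 * ‖g‖ ^ 2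
  have hφ' : ∀ t : ℝ, HasDerivAt φ
      (⟪gradient f (x + t • g), g⟫_ℝ - ⟪gradient f x, g⟫_ℝ - L * t * ‖g‖ ^ 2) t := by
    intro t
    have hline : HasDerivAt (fun u : ℝ => x + u • g) g t := by
      simpa using ((hasDerivAt_id t).smul_const g).const_add x
    have hcomp := (hf _).hasGradientAt.hasFDerivAt.comp_hasDerivAt t hline
    rw [toDual_apply_apply] at hcomp
    refine ((hcomp.sub ((hasDerivAt_id t).mul_const ⟪gradient f x, g⟫_ℝ)).sub
      (((hasDerivAt_pow 2 t).const_mul (L / 2)).mul_const (‖g‖ ^ 2))).congr_deriv ?_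
    simp only [Nat.cast_ofNat, one_mul]
    ring
  have hanti : AntitoneOn φ (Set.Icc 0 1) := by
    refine antitoneOn_of_hasDerivWithinAt_nonpos (convex_Icc 0 1)
      (fun t _ => (hφ' t).continuousAt.continuousWithinAt)
      (fun t _ => (hφ' t).hasDerivWithinAt) fun t ht => ?_
    rw [interior_Icc] at ht
    have hmem : x + t • g ∈ s := hs.add_smul_sub_mem hx hy (Set.Ioo_subset_Icc_self ht)
    have hgrad : ‖gradient f (x + t • g) - gradient f x‖ ≤ L * (t * ‖g‖) := by
      simpa [norm_smul, abs_of_pos ht.1] using hlip _ hmem _ hx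
    have hinner := real_inner_le_norm (gradient f (x + t • g) - gradient f x) g
    rw [inner_sub_left] at hinner
    nlinarith [norm_nonneg g]
  have h01 := hanti (Set.left_mem_Icc.2 zero_le_one) (Set.right_mem_Icc.2 zero_le_one) zero_le_one
  simp only [φ, g, one_smul, add_sub_cancel, zero_smul, add_zero] at h01
  linarith

end Descent

section Orthant

variable {ι : Type*}

theorem convex_setOf_forall_nonneg :
    Convex ℝ {x : EuclideanSpace ℝ ι | ∀ i, 0 ≤ x i} := by
  intro a ha b hb p q hp hq _ i
  simp only [PiLp.add_apply, PiLp.smul_apply, smul_eq_mul]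
  have := ha i
  have := hb i
  positivity

noncomputable def orthantGradientStep (L : ℝ) (g x : EuclideanSpace ℝ ι) :
    EuclideanSpace ℝ ι :=
  WithLp.toLp 2 fun i => max (x i - g i / L) 0

theorem orthantGradientStep_nonneg (L : ℝ) (g x : EuclideanSpace ℝ ι) (i : ι) :
    0 ≤ orthantGradientStep L g x i :=
  le_max_right _ _

theorem mul_add_sq_max_sub_le {L : ℝ} (hL : 0 < L) {a : ℝ} (ha : 0 ≤ a) (g : ℝ) :
    g * (max (a - g / L) 0 - a) + L / 2 * (max (a - g / L) 0 - a) ^ 2 ≤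
      -(if g / L < a then 1 / (2 * L) * g ^ 2 else 1 / 2 * (g * a)) := by
  split_ifs with h
  · rw [max_eq_left (by linarith)]
    apply le_of_eq
    field_simp
    ring
  · have hga : L * a ≤ g := by rwa [not_lt, le_div_iff₀ hL, mul_comm] at h
    rw [max_eq_right (by linarith)]
    nlinarith

theorem inner_add_sq_norm_orthantGradientStep_le [Fintype ι] {L : ℝ} (hL : 0 < L)
    (g x : EuclideanSpace ℝ ι) (hx : ∀ i, 0 ≤ x i) :
    ⟪g, orthantGradientStep L g x - x⟫_ℝ + L / 2 * ‖orthantGradientStep L g x - x‖ ^ 2 ≤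
      -((1 / (2 * L)) * ∑ i ∈ Finset.univ.filter (fun i => g i / L < x i), g i ^ 2
        + (1 / 2) * ∑ i ∈ Finset.univ.filter (fun i => ¬ g i / L < x i), g i * x i) := by
  rw [EuclideanSpace.norm_sq_eq, PiLp.inner_apply, Finset.mul_sum, Finset.mul_sum,
    Finset.mul_sum, ← Finset.sum_add_distrib, ← Finset.sum_ite, ← Finset.sum_neg_distrib]
  refine Finset.sum_le_sum fun i _ => ?_
  simpa [orthantGradientStep, mul_comm (g i)] using mul_add_sq_max_sub_le hL (hx i) (g i)

end Orthant

theorem stmt_11_general (m : ℕ) (L : ℝ) (hL : 0 < L)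
    (f : EuclideanSpace ℝ (Fin m) → ℝ) (hf : Differentiable ℝ f)
    (hlip : ∀ x : EuclideanSpace ℝ (Fin m), (∀ i, 0 ≤ x i) →
      ∀ y : EuclideanSpace ℝ (Fin m), (∀ i, 0 ≤ y i) →
      ‖gradient f x - gradient f y‖ ≤ L * ‖x - y‖)
    (lstar : EuclideanSpace ℝ (Fin m))
    (hmin : ∀ μ : EuclideanSpace ℝ (Fin m), (∀ i, 0 ≤ μ i) → f lstar ≤ f μ)
    (lam : EuclideanSpace ℝ (Fin m)) (hlam : ∀ i, 0 ≤ lam i) :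
    (1 / (2 * L)) * (∑ i ∈ Finset.univ.filter
        (fun i => gradient f lam i / L < lam i), (gradient f lam i) ^ 2)
      + (1 / 2) * (∑ i ∈ Finset.univ.filter
        (fun i => ¬ gradient f lam i / L < lam i), gradient f lam i * lam i)
      ≤ f lam - f lstar := by
  set y := orthantGradientStep L (gradient f lam) lam
  have hy : ∀ i, 0 ≤ y i := orthantGradientStep_nonneg L (gradient f lam) lam
  have hdescent : f y ≤ f lam + ⟪gradient f lam, y - lam⟫_ℝ + L / 2 * ‖y - lam‖ ^ 2 :=
    convex_setOf_forall_nonneg.le_add_inner_gradient_add_sq hf hlip hlam hy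
  have hstep := inner_add_sq_norm_orthantGradientStep_le hL (gradient f lam) lam hlam
  linarith [hmin y hy]

theorem stmt_11 (m : ℕ) (hm : 1 ≤ m) (L : ℝ) (hL : 0 < L)
    (f : EuclideanSpace ℝ (Fin m) → ℝ) (hf : Differentiable ℝ f)
    (hlip : ∀ x : EuclideanSpace ℝ (Fin m), (∀ i, 0 ≤ x i) →
      ∀ y : EuclideanSpace ℝ (Fin m), (∀ i, 0 ≤ y i) →
      ‖gradient f x - gradient f y‖ ≤ L * ‖x - y‖)
    (lstar : EuclideanSpace ℝ (Fin m)) (hstar : ∀ i, 0 ≤ lstar i)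
    (hmin : ∀ μ : EuclideanSpace ℝ (Fin m), (∀ i, 0 ≤ μ i) → f lstar ≤ f μ)
    (lam : EuclideanSpace ℝ (Fin m)) (hlam : ∀ i, 0 ≤ lam i) :
    (1 / (2 * L)) * (∑ i ∈ Finset.univ.filter
        (fun i => gradient f lam i / L < lam i), (gradient f lam i) ^ 2)
      + (1 / 2) * (∑ i ∈ Finset.univ.filter
        (fun i => ¬ gradient f lam i / L < lam i), gradient f lam i * lam i)
      ≤ f lam - f lstar :=
  stmt_11_general m L hL f hf hlip lstar hmin lam hlam
end
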